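/- arXiv:2603.19587 — 5 statements merged into one kernel-verified Lean document; each statement's English description precedes it below -/
import Mathlib

section
/- Let k be an algebraically closed field of characteristic 0, B a finitely generated k-domain, and D a nonzero semisimple k-derivation of B. If a ∈ ker(D) and the derivation a·D is semisimple, then a ∈ k. -/
/-- A `k`-linear endomorphism is semisimple if the algebra is spanned by its eigenvectors. -/
def IsSemisimpleOp {k B : Type*} [Field k] [AddCommGroup B] [Module k B]
    (T : B →ₗ[k] B) : Prop :=
  ⨆ μ : k, Module.End.eigenspace T μ = ⊤

/-- over an algebraically closed field of characteristic zero,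
if `D ≠ 0` is a semisimple derivation of a finitely generated domain `B`,
`a ∈ ker D`, and `a • D` is semisimple, then `a` is a scalar. -/
theorem stmt4 {k B : Type*} [Field k] [IsAlgClosed k] [CharZero k]
    [CommRing B] [IsDomain B] [Algebra k B] [Algebra.FiniteType k B]
    (D : Derivation k B B) (hD0 : D ≠ 0) (hD : IsSemisimpleOp D.toLinearMap)
    (a : B) (ha : D a = 0) (haD : IsSemisimpleOp (a • D).toLinearMap) :
    a ∈ (algebraMap k B).range := by
  classical
  haveI : NoZeroSMulDivisors k B :=
    inferInstance
  unfold IsSemisimpleOp at hD haD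
  set T := D.toLinearMap with hTdef
  set S := (a • D).toLinearMap with hSdef
  have hTapp : ∀ x : B, T x = D x := fun x => rfl
  have hSapp : ∀ x : B, S x = a * D x := fun x => by
    show (a • D) x = a * D x
    rw [Derivation.smul_apply, smul_eq_mul]
  -- D and a•D commute since D a = 0
  have hcomm : ∀ x : B, S (T x) = T (S x) := by
    intro x
    rw [hSapp, hTapp, hTapp, hSapp, Derivation.leibniz, ha, smul_zero, add_zero, smul_eq_mul]
  -- Step 1: find a nonzero eigenvector of D with nonzero eigenvalue
  have hT0 : ∃ (l : k) (b : B), l ≠ 0 ∧ b ≠ 0 ∧ T b = l • b := by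
    by_contra hcon
    push_neg at hcon
    apply hD0
    have hsub : ∀ μ : k, Module.End.eigenspace T μ ≤ Module.End.eigenspace T 0 := by
      intro μ
      rcases eq_or_ne μ 0 with rfl | hμ
      · exact le_rfl
      · intro x hx
        rw [Module.End.mem_eigenspace_iff] at hx
        rcases eq_or_ne x 0 with rfl | hx0
        · exact Submodule.zero_mem _
        · exact absurd hx (hcon μ x hμ hx0)
    have hall : ∀ x : B, D x = 0 := by
      intro x
      have hx : x ∈ (⊤ : Submodule k B) := Submodule.mem_top
      rw [← hD] at hx
      have hx0 : x ∈ Module.End.eigenspace T 0 := iSup_le hsub hx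
      rw [Module.End.mem_eigenspace_iff, zero_smul] at hx0
      exact hx0
    ext x
    simp [hall]
  obtain ⟨l, b, hl, hb, hTb⟩ := hT0
  -- Step 2: decompose b into eigenvectors of S
  have hbtop : b ∈ ⨆ μ : k, Module.End.eigenspace S μ := by
    rw [haD]; exact Submodule.mem_top
  obtain ⟨f, hf, hsum⟩ := (Submodule.mem_iSup_iff_exists_finsupp _ _).mp hbtop
  have hsum' : ∑ μ ∈ f.support, f μ = b := hsum
  set w : k → B := fun μ => T (f μ) - l • f μ with hwdef
  have hw : ∀ μ : k, w μ ∈ Module.End.eigenspace S μ := by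
    intro μ
    have h1 : S (f μ) = μ • f μ := Module.End.mem_eigenspace_iff.mp (hf μ)
    rw [Module.End.mem_eigenspace_iff]
    calc S (w μ) = S (T (f μ)) - l • S (f μ) := by rw [hwdef, map_sub, map_smul]
      _ = T (S (f μ)) - l • (μ • f μ) := by rw [hcomm, h1]
      _ = T (μ • f μ) - l • μ • f μ := by rw [h1]
      _ = μ • (T (f μ) - l • f μ) := by
          rw [map_smul, smul_sub, smul_comm l μ]
      _ = μ • w μ := rfl
  have hsumw : ∑ μ ∈ f.support, w μ = 0 := by
    rw [hwdef]
    rw [Finset.sum_sub_distrib, ← map_sum, ← Finset.smul_sum, hsum', hTb, sub_self]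
  -- eigenspaces of S are independent, so each w μ = 0
  have hw0 : ∀ μ : k, w μ = 0 := by
    intro μ
    by_cases hμs : μ ∈ f.support
    · have hkey : w μ = -∑ ν ∈ f.support.erase μ, w ν := by
        have h2 := Finset.add_sum_erase f.support w hμs
        rw [hsumw] at h2
        exact eq_neg_of_add_eq_zero_left h2
      have hmem2 : w μ ∈ ⨆ ν, ⨆ _ : ν ≠ μ, Module.End.eigenspace S ν := by
        rw [hkey]
        exact Submodule.neg_mem _ (Submodule.sum_mem _ fun ν hν =>
          Submodule.mem_iSup_of_mem ν
            (Submodule.mem_iSup_of_mem (Finset.ne_of_mem_erase hν) (hw ν)))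
      exact Submodule.disjoint_def.mp (Module.End.eigenspaces_iSupIndep S μ) _ (hw μ) hmem2
    · have hfz : f μ = 0 := Finsupp.notMem_support_iff.mp hμs
      rw [hwdef]
      simp [hfz]
  -- get a simultaneous eigenvector
  have hex : ∃ μ : k, f μ ≠ 0 := by
    by_contra hcon
    push_neg at hcon
    apply hb
    rw [← hsum']
    exact Finset.sum_eq_zero fun μ _ => hcon μ
  obtain ⟨μ0, hμ0⟩ := hex
  have hTfμ : T (f μ0) = l • f μ0 := by
    have := hw0 μ0
    rw [hwdef] at this
    exact sub_eq_zero.mp this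
  have hSfμ : S (f μ0) = μ0 • f μ0 := Module.End.mem_eigenspace_iff.mp (hf μ0)
  -- a * (l • f μ0) = μ0 • f μ0
  have hkey : (l • a) * f μ0 = (μ0 • (1 : B)) * f μ0 := by
    have h1 : a * D (f μ0) = μ0 • f μ0 := by rw [← hSapp, hSfμ]
    have h2 : D (f μ0) = l • f μ0 := by rw [← hTapp, hTfμ]
    rw [h2] at h1
    calc (l • a) * f μ0 = l • (a * f μ0) := by rw [smul_mul_assoc]
      _ = a * (l • f μ0) := by rw [mul_smul_comm]
      _ = μ0 • f μ0 := h1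
      _ = μ0 • (1 * f μ0) := by rw [one_mul]
      _ = (μ0 • (1 : B)) * f μ0 := by rw [smul_mul_assoc]
  have hcancel : l • a = μ0 • (1 : B) := mul_right_cancel₀ hμ0 hkey
  refine ⟨l⁻¹ * μ0, ?_⟩
  rw [Algebra.algebraMap_eq_smul_one, mul_smul]
  rw [← hcancel, ← mul_smul, inv_mul_cancel₀ hl, one_smul]
end

section
/- Let L ⊆ K be fields of characteristic zero, D a derivation of K vanishing on L, and s ∈ K nonzero with D(s) = s. If s is algebraic over L, a contradiction arises; i.e., s must be transcendental over L. -/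
/-- if `D` is a derivation of `K` vanishing on a subfield `L`
and `D s = s` with `s ≠ 0`, then `s` is transcendental over `L`. -/
theorem stmt11 {L K : Type*} [Field L] [Field K] [CharZero K] [Algebra L K]
    (D : Derivation ℚ K K) (hL : ∀ x : L, D (algebraMap L K x) = 0)
    (s : K) (hs : s ≠ 0) (hDs : D s = s) :
    Transcendental L s := by
  intro halg
  have hchar : CharZero L := (algebraMap L K).charZero
  have hST : IsScalarTower ℚ L K :=
    IsScalarTower.of_algebraMap_eq fun q => by
      rw [show (algebraMap ℚ K) = (algebraMap L K).comp (algebraMap ℚ L) from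
        Subsingleton.elim _ _]
      rfl
  have key := Derivation.apply_aeval_eq D s (minpoly L s)
  rw [minpoly.aeval, map_zero] at key
  have hzero : (D.compAlgebraMap L).mapCoeffs (minpoly L s) = 0 := by
    apply PolynomialModule.ext
    apply Finsupp.ext
    intro i
    simpa using hL ((minpoly L s).coeff i)
  rw [hzero, map_zero, map_zero, hDs, smul_eq_mul, zero_add] at key
  have hder : (Polynomial.aeval s) (Polynomial.derivative (minpoly L s)) = 0 := by
    rcases mul_eq_zero.mp key.symm with h | h
    · exact h
    · exact absurd h hs
  exact (minpoly.irreducible halg.isIntegral).separable.aeval_derivative_ne_zero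
    (minpoly.aeval L s) hder
end

section
/- Let K be a field of characteristic zero containing k, D a k-derivation of K with integer eigenvalues, s ∈ K with D(s) = s, and suppose K = k(b₁,…,bₙ) with D(bᵢ) = λᵢ·bᵢ, λᵢ ∈ ℤ, bᵢ ≠ 0. Then ker(D) = k(b₁s^{-λ₁},…,bₙs^{-λₙ}) and K = ker(D)(s). -/
open Polynomial IntermediateField

theorem aux_ratconst {E : Type*} [Field E] [CharZero E] {P Q : E[X]} (hQ : Q ≠ 0)
    (h : derivative P * Q = P * derivative Q) :
    ∃ c : E, P = Polynomial.C c * Q := by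
  classical
  by_cases hP : P = 0
  · exact ⟨0, by simp [hP]⟩
  set d := GCDMonoid.gcd P Q with hd
  have hdP : d ∣ P := gcd_dvd_left P Q
  have hdQ : d ∣ Q := gcd_dvd_right P Q
  have hd0 : d ≠ 0 := gcd_ne_zero_of_right hQ
  set P₁ := P / d with hP₁
  set Q₁ := Q / d with hQ₁
  have hP1 : P = d * P₁ := (EuclideanDomain.mul_div_cancel' hd0 hdP).symm
  have hQ1 : Q = d * Q₁ := (EuclideanDomain.mul_div_cancel' hd0 hdQ).symm
  have hcop : IsCoprime P₁ Q₁ := isCoprime_div_gcd_div_gcd hQ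
  have hQ10 : Q₁ ≠ 0 := by intro h0; apply hQ; rw [hQ1, h0, mul_zero]
  have h2 : d * d * (derivative P₁ * Q₁) = d * d * (P₁ * derivative Q₁) := by
    have h' := h
    rw [hP1, hQ1, derivative_mul, derivative_mul] at h'
    linear_combination h'
  have key : derivative P₁ * Q₁ = P₁ * derivative Q₁ :=
    mul_left_cancel₀ (mul_ne_zero hd0 hd0) h2
  have hQdvd : Q₁ ∣ derivative Q₁ := by
    refine (hcop.symm).dvd_of_dvd_mul_left ?_
    rw [← key]; exact dvd_mul_left _ _
  have hQ1' : derivative Q₁ = 0 :=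
    Polynomial.eq_zero_of_dvd_of_degree_lt hQdvd (degree_derivative_lt hQ10)
  have hP1' : derivative P₁ = 0 := by
    have h0 : derivative P₁ * Q₁ = 0 := by rw [key, hQ1', mul_zero]
    exact (mul_eq_zero.mp h0).resolve_right hQ10
  obtain ⟨q, hq⟩ : ∃ q, Q₁ = C q :=
    ⟨_, Polynomial.eq_C_of_natDegree_eq_zero
      (Polynomial.natDegree_eq_zero_of_derivative_eq_zero hQ1')⟩
  obtain ⟨p, hp⟩ : ∃ p, P₁ = C p :=
    ⟨_, Polynomial.eq_C_of_natDegree_eq_zero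
      (Polynomial.natDegree_eq_zero_of_derivative_eq_zero hP1')⟩
  have hq0 : q ≠ 0 := by rintro rfl; exact hQ10 (by simp [hq])
  refine ⟨p * q⁻¹, ?_⟩
  rw [hP1, hQ1, hp, hq]
  have hpq : p * q⁻¹ * q = p := by field_simp
  calc d * C p = d * C (p * q⁻¹ * q) := by rw [hpq]
    _ = C (p * q⁻¹) * (d * C q) := by rw [C_mul]; ring

/-- The kernel of a derivation as an intermediate field. -/
def kerIF {k K : Type*} [Field k] [Field K] [Algebra k K]
    (D : Derivation k K K) : IntermediateField k K where
  carrier := {x | D x = 0}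
  mul_mem' := by
    intro a b ha hb
    simp only [Set.mem_setOf_eq] at *
    rw [D.leibniz, ha, hb, smul_zero, smul_zero, add_zero]
  one_mem' := by simp [Set.mem_setOf_eq]
  add_mem' := by
    intro a b ha hb
    simp only [Set.mem_setOf_eq] at *
    rw [map_add, ha, hb, add_zero]
  zero_mem' := by simp [Set.mem_setOf_eq]
  algebraMap_mem' := fun r => by
    simp only [Set.mem_setOf_eq]
    exact D.map_algebraMap r
  inv_mem' := by
    intro x hx
    simp only [Set.mem_setOf_eq] at *
    by_cases hx0 : x = 0
    · simp [hx0]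
    · have h := D.leibniz x x⁻¹
      rw [mul_inv_cancel₀ hx0, D.map_one_eq_zero, hx, smul_zero, add_zero, smul_eq_mul] at h
      rcases mul_eq_zero.mp h.symm with h1 | h1
      · exact absurd h1 hx0
      · exact h1

set_option maxHeartbeats 1000000
set_option synthInstance.maxHeartbeats 400000

/-- if `K = k(b₁,…,bₙ)` with `D bᵢ = λᵢ bᵢ` (`λᵢ ∈ ℤ`) and `D s = s`
with `s ≠ 0`, then `ker D = k(b₁ s^{-λ₁}, …, bₙ s^{-λₙ})` and `K = ker(D)(s)`. -/
theorem stmt13 {k K : Type*} [Field k] [Field K] [CharZero K] [Algebra k K]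
    (D : Derivation k K K) (n : ℕ) (b : Fin n → K) (lam : Fin n → ℤ)
    (hb : ∀ i, b i ≠ 0) (hDb : ∀ i, D (b i) = (lam i : K) * b i)
    (hgen : IntermediateField.adjoin k (Set.range b) = ⊤)
    (s : K) (hs : s ≠ 0) (hDs : D s = s) :
    (∀ x : K, D x = 0 ↔
        x ∈ IntermediateField.adjoin k (Set.range fun i => b i * s ^ (-(lam i)))) ∧
    IntermediateField.adjoin k
      (insert s (Set.range fun i => b i * s ^ (-(lam i)))) = ⊤ := by
  classical
  set c : Fin n → K := fun i => b i * s ^ (-(lam i)) with hc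
  -- basic derivation computations
  have hDinv : ∀ y : K, y ≠ 0 → D y⁻¹ = -(y⁻¹ * y⁻¹) * D y := by
    intro y hy
    have h := D.leibniz y y⁻¹
    rw [mul_inv_cancel₀ hy, D.map_one_eq_zero, smul_eq_mul, smul_eq_mul] at h
    have hyy : y * y⁻¹ = 1 := mul_inv_cancel₀ hy
    apply mul_left_cancel₀ hy
    linear_combination (-1 : K) * h + (y⁻¹ * D y) * hyy
  have hpow : ∀ m : ℕ, D (s ^ m) = (m : K) * s ^ m := by
    intro m
    induction m with
    | zero => simp
    | succ p ih =>
      rw [pow_succ, D.leibniz, ih, hDs, smul_eq_mul, smul_eq_mul]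
      push_cast; ring
  have hzpow : ∀ m : ℤ, D (s ^ m) = (m : K) * s ^ m := by
    intro m
    cases m with
    | ofNat m => simpa using hpow m
    | negSucc m =>
      have hsm : s ^ (m + 1) ≠ 0 := pow_ne_zero _ hs
      rw [zpow_negSucc, hDinv _ hsm, hpow]
      rw [Int.cast_negSucc]
      field_simp
  have hDc : ∀ i, D (c i) = 0 := by
    intro i
    rw [hc]
    simp only
    rw [D.leibniz, hzpow, hDb, smul_eq_mul, smul_eq_mul]
    push_cast
    ring
  have hEker : ∀ y ∈ IntermediateField.adjoin k (Set.range c), D y = 0 := by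
    have hle : IntermediateField.adjoin k (Set.range c) ≤ kerIF D := by
      apply IntermediateField.adjoin_le_iff.mpr
      rintro _ ⟨i, rfl⟩
      exact hDc i
    intro y hy
    exact hle hy
  -- second statement
  have hbc : ∀ i, b i = c i * s ^ (lam i) := by
    intro i
    rw [hc]
    simp only
    rw [mul_assoc, ← zpow_add₀ hs]
    simp
  have hF : IntermediateField.adjoin k (insert s (Set.range c)) = ⊤ := by
    rw [eq_top_iff, ← hgen]
    apply IntermediateField.adjoin_le_iff.mpr
    rintro _ ⟨i, rfl⟩
    rw [hbc i]
    have hsF : s ∈ IntermediateField.adjoin k (insert s (Set.range c)) :=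
      IntermediateField.subset_adjoin _ _ (Set.mem_insert _ _)
    have hcF : c i ∈ IntermediateField.adjoin k (insert s (Set.range c)) :=
      IntermediateField.subset_adjoin _ _ (Set.mem_insert_of_mem _ ⟨i, rfl⟩)
    exact mul_mem hcF (zpow_mem hsF _)
  refine ⟨?_, hF⟩
  -- derivation of aeval over E
  have hDaeval : ∀ P : Polynomial (IntermediateField.adjoin k (Set.range c)), D (aeval s P) = s * aeval s (derivative P) := by
    intro P
    induction P using Polynomial.induction_on' with
    | add p q hp hq => rw [map_add, derivative_add, map_add, map_add, hp, hq]; ring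
    | monomial m a =>
      have ha : D ((algebraMap (↥(IntermediateField.adjoin k (Set.range c))) K) a) = 0 :=
        hEker _ a.2
      rw [aeval_monomial, derivative_monomial, aeval_monomial, D.leibniz,
        ha, smul_zero, add_zero, hpow, smul_eq_mul]
      cases m with
      | zero => simp
      | succ p =>
        push_cast [Nat.succ_sub_one]
        ring
  -- s is transcendental over E
  have htrans : ¬ IsAlgebraic (IntermediateField.adjoin k (Set.range c)) s := by
    intro halg
    have hint : IsIntegral (IntermediateField.adjoin k (Set.range c)) s := halg.isIntegral
    set m := minpoly (IntermediateField.adjoin k (Set.range c)) s with hm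
    have hm0 : m ≠ 0 := minpoly.ne_zero hint
    have hmd : derivative m ≠ 0 := by
      intro h0
      have h1 := Polynomial.natDegree_eq_zero_of_derivative_eq_zero h0
      have h2 := minpoly.natDegree_pos hint
      rw [← hm] at h2
      omega
    have h1 : D (aeval s m) = 0 := by rw [minpoly.aeval]; simp
    rw [hDaeval] at h1
    have h2 : aeval s (derivative m) = 0 := (mul_eq_zero.mp h1).resolve_left hs
    have h3 := minpoly.degree_le_of_ne_zero (IntermediateField.adjoin k (Set.range c)) s hmd h2
    exact absurd h3 (Polynomial.degree_derivative_lt hm0).not_ge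
  have hinj : ∀ p : Polynomial (IntermediateField.adjoin k (Set.range c)), aeval s p = 0 → p = 0 := by
    intro p hp
    by_contra h0
    exact htrans ⟨p, h0, hp⟩
  intro x
  constructor
  · intro hx
    -- x ∈ E⟮s⟯
    have hx' : x ∈ IntermediateField.adjoin (IntermediateField.adjoin k (Set.range c)) {s} := by
      have hmem : x ∈ (IntermediateField.adjoin (IntermediateField.adjoin k (Set.range c)) {s}).restrictScalars k := by
        rw [IntermediateField.adjoin_adjoin_left, Set.union_singleton, hF]
        trivial
      exact hmem
    obtain ⟨P, Q, hPQ⟩ := (IntermediateField.mem_adjoin_simple_iff _ x).mp hx'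
    by_cases hQs : aeval s Q = 0
    · rw [hPQ, hQs, div_zero]
      exact zero_mem _
    · have hQ0 : Q ≠ 0 := fun h => hQs (by simp [h])
      have hxB : x * aeval s Q = aeval s P := by
        rw [hPQ]; field_simp
      have hD1 : x * (s * aeval s (derivative Q)) = s * aeval s (derivative P) := by
        have h4 := congrArg D hxB
        rw [D.leibniz, hx, smul_zero, add_zero, hDaeval, hDaeval, smul_eq_mul] at h4
        exact h4
      have hD' : x * aeval s (derivative Q) = aeval s (derivative P) := by
        apply mul_left_cancel₀ hs
        rw [← hD1]; ring
      have hpoly : derivative P * Q = P * derivative Q := by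
        have h5 : aeval s (derivative P * Q - P * derivative Q) = 0 := by
          rw [map_sub, map_mul, map_mul, ← hD', ← hxB]
          ring
        exact sub_eq_zero.mp (hinj _ h5)
      obtain ⟨cc, hcc⟩ := aux_ratconst hQ0 hpoly
      have hxc : x = algebraMap (IntermediateField.adjoin k (Set.range c)) K cc := by
        rw [hPQ, hcc, map_mul, aeval_C, mul_div_assoc, div_self hQs, mul_one]
      rw [hxc]
      exact cc.2
  · intro hx
    exact hEker x hx
end

section
/- Let B = k[b₁,…,bₙ] with a derivation D satisfying D(bᵢ) = λᵢ·bᵢ for integers λᵢ, and suppose s ∈ B satisfies D(s) = s with s ≠ 0. Then in the localization B_s = B[s⁻¹], the kernel of the extended derivation equals k[b₁s^{-λ₁},…,bₙs^{-λₙ}]. -/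
/-- let `B = k[b₁,…,bₙ]` with `D bᵢ = λᵢ bᵢ` (`λᵢ ∈ ℤ`) and let
`s ∈ B`, `s ≠ 0`, with `D s = s`. Then in `B_s = B[s⁻¹]` the kernel of the extended
derivation is `k[b₁ s^{-λ₁}, …, bₙ s^{-λₙ}]`. -/
theorem stmt14 {k B : Type*} [Field k] [CharZero k] [CommRing B] [IsDomain B]
    [Algebra k B]
    (n : ℕ) (b : Fin n → B) (hgen : Algebra.adjoin k (Set.range b) = ⊤)
    (D : Derivation k B B) (lam : Fin n → ℤ)
    (hDb : ∀ i, D (b i) = lam i • b i)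
    (s : B) (hs : s ≠ 0) (hDs : D s = s)
    (D' : Derivation k (Localization.Away s) (Localization.Away s))
    (hext : ∀ x : B, D' (algebraMap B (Localization.Away s) x) =
      algebraMap B (Localization.Away s) (D x)) :
    ∀ x : Localization.Away s, D' x = 0 ↔
      x ∈ Algebra.adjoin k (Set.range fun i =>
        algebraMap B (Localization.Away s) (b i) *
          ((((IsLocalization.Away.algebraMap_isUnit (S := Localization.Away s) s).unit :
              (Localization.Away s)ˣ) ^ (-(lam i)) : (Localization.Away s)ˣ) : Localization.Away s)) := by
  classical
  set L := Localization.Away s with hLdef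
  set u : Lˣ := (IsLocalization.Away.algebraMap_isUnit (S := L) s).unit with hudef
  set S : B →+* L := algebraMap B L with hSdef
  set A : Subalgebra k L := Algebra.adjoin k (Set.range fun i =>
      S (b i) * ((u ^ (-(lam i)) : Lˣ) : L)) with hAdef
  intro x
  have hu : (u : L) = S s := (IsLocalization.Away.algebraMap_isUnit (S := L) s).unit_spec
  have hD'u : D' (u : L) = (u : L) := by rw [hu, hext, hDs]
  -- derivative of integer powers of the unit u
  have hnat : ∀ nn : ℕ, D' ((u : L) ^ nn) = nn • ((u : L) ^ nn) := by
    intro nn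
    induction nn with
    | zero => simp
    | succ p ih =>
      rw [pow_succ, Derivation.leibniz, ih, hD'u]
      simp only [smul_eq_mul, succ_nsmul, add_mul, mul_comm, mul_assoc, mul_smul_comm,
        smul_mul_assoc]
      ring
  have hinv : ∀ V : Lˣ, D' ((V⁻¹ : Lˣ) : L) =
      -(((V⁻¹ : Lˣ) : L) * (((V⁻¹ : Lˣ) : L) * D' (V : L))) := by
    intro V
    have h0 : (V : L) • D' ((V⁻¹ : Lˣ) : L) + ((V⁻¹ : Lˣ) : L) • D' (V : L) = 0 := by
      have h1 : ((V : L) * ((V⁻¹ : Lˣ) : L)) = 1 := Units.mul_inv V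
      rw [← Derivation.leibniz, h1, Derivation.map_one_eq_zero]
    have h1 : D' ((V⁻¹ : Lˣ) : L) = ((V⁻¹ : Lˣ) : L) * ((V : L) * D' ((V⁻¹ : Lˣ) : L)) := by
      rw [← mul_assoc, Units.inv_mul, one_mul]
    have h2 : (V : L) * D' ((V⁻¹ : Lˣ) : L) = -(((V⁻¹ : Lˣ) : L) * D' (V : L)) := by
      have := eq_neg_of_add_eq_zero_left h0
      simpa [smul_eq_mul] using this
    rw [h1, h2, mul_neg]
  have hzpow : ∀ m : ℤ, D' ((u ^ m : Lˣ) : L) = m • ((u ^ m : Lˣ) : L) := by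
    intro m
    cases m with
    | ofNat p =>
      simp only [Int.ofNat_eq_natCast, zpow_natCast, Units.val_pow_eq_pow_val, natCast_zsmul]
      exact hnat p
    | negSucc p =>
      rw [zpow_negSucc, hinv, Units.val_pow_eq_pow_val, hnat (p + 1)]
      have hw : (((u ^ (p + 1))⁻¹ : Lˣ) : L) * ((u : L) ^ (p + 1)) = 1 := by
        rw [← Units.val_pow_eq_pow_val, Units.inv_mul]
      rw [negSucc_zsmul, mul_smul_comm, mul_smul_comm, hw, mul_one]
  -- generators of A are killed by D'
  have hgen0 : ∀ i, D' (S (b i) * ((u ^ (-(lam i)) : Lˣ) : L)) = 0 := by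
    intro i
    rw [Derivation.leibniz, hzpow, hext, hDb]
    have hmap : S (lam i • b i) = lam i • S (b i) := map_zsmul S _ _
    rw [hmap]
    simp only [smul_eq_mul, mul_smul_comm, neg_zsmul, smul_neg]
    rw [mul_neg, mul_smul_comm, mul_comm (S (b i))]
    exact neg_add_cancel _
  have hAker : ∀ y ∈ A, D' y = 0 := by
    intro y hy
    rw [hAdef] at hy
    induction hy using Algebra.adjoin_induction with
    | mem z hz => obtain ⟨i, rfl⟩ := hz; exact hgen0 i
    | algebraMap c => exact D'.map_algebraMap c
    | add a c ha hc h1 h2 => rw [map_add, h1, h2, add_zero]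
    | mul a c ha hc h1 h2 => rw [Derivation.leibniz, h1, h2, smul_zero, smul_zero, add_zero]
  -- the graded pieces
  set M : ℤ → Submodule k L := fun d =>
    (Subalgebra.toSubmodule A).map (LinearMap.mulRight k ((u ^ d : Lˣ) : L)) with hMdef
  have hMmem : ∀ (d : ℤ) (y : L), y ∈ M d ↔ ∃ a ∈ A, a * ((u ^ d : Lˣ) : L) = y := by
    intro d y
    simp [hMdef, Submodule.mem_map, LinearMap.mulRight_apply, Subalgebra.mem_toSubmodule]
  have hMeig : ∀ (d : ℤ), ∀ y ∈ M d, D' y = (d : k) • y := by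
    intro d y hy
    obtain ⟨a, haA, rfl⟩ := (hMmem d y).mp hy
    rw [Derivation.leibniz, hzpow, hAker a haA, smul_zero, add_zero, smul_eq_mul,
      mul_smul_comm, Int.cast_smul_eq_zsmul]
  -- the graded pieces span everything
  have hmulT : ∀ y ∈ (⨆ d, M d : Submodule k L), ∀ z ∈ (⨆ d, M d : Submodule k L),
      y * z ∈ (⨆ d, M d : Submodule k L) := by
    intro y hy
    induction hy using Submodule.iSup_induction' with
    | mem d y hyd =>
      intro z hz
      induction hz using Submodule.iSup_induction' with
      | mem e z hze =>
        obtain ⟨a, haA, rfl⟩ := (hMmem d y).mp hyd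
        obtain ⟨c, hcA, rfl⟩ := (hMmem e z).mp hze
        refine Submodule.mem_iSup_of_mem (d + e) ((hMmem (d + e) _).mpr
          ⟨a * c, mul_mem haA hcA, ?_⟩)
        rw [zpow_add, Units.val_mul]
        ring
      | zero => rw [mul_zero]; exact Submodule.zero_mem _
      | add z w hz hw h1 h2 => rw [mul_add]; exact Submodule.add_mem _ h1 h2
    | zero => intro z hz; rw [zero_mul]; exact Submodule.zero_mem _
    | add y w hy hw h1 h2 =>
      intro z hz
      rw [add_mul]
      exact Submodule.add_mem _ (h1 z hz) (h2 z hz)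
  have hAsub : ∀ a ∈ A, ∀ m : ℤ, a * ((u ^ m : Lˣ) : L) ∈ (⨆ d, M d : Submodule k L) :=
    fun a ha m => Submodule.mem_iSup_of_mem m ((hMmem m _).mpr ⟨a, ha, rfl⟩)
  have hkey : ∀ a : B, ∀ m : ℤ, S a * ((u ^ m : Lˣ) : L) ∈ (⨆ d, M d : Submodule k L) := by
    intro a
    have ha : a ∈ Algebra.adjoin k (Set.range b) := hgen ▸ Algebra.mem_top
    induction ha using Algebra.adjoin_induction with
    | mem z hz =>
      obtain ⟨i, rfl⟩ := hz
      intro m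
      have : S (b i) * ((u ^ m : Lˣ) : L) =
          (S (b i) * ((u ^ (-(lam i)) : Lˣ) : L)) * ((u ^ (lam i + m) : Lˣ) : L) := by
        rw [mul_assoc, ← Units.val_mul, ← zpow_add, neg_add_cancel_left]
      rw [this]
      exact hAsub _ (Algebra.subset_adjoin ⟨i, rfl⟩) _
    | algebraMap c =>
      intro m
      have : S (algebraMap k B c) = algebraMap k L c := by
        rw [hSdef, ← IsScalarTower.algebraMap_apply]
      rw [this]
      exact hAsub _ (Subalgebra.algebraMap_mem A c) m
    | add a c ha hc h1 h2 =>
      intro m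
      rw [map_add, add_mul]
      exact Submodule.add_mem _ (h1 m) (h2 m)
    | mul a c ha hc h1 h2 =>
      intro m
      have : S (a * c) * ((u ^ m : Lˣ) : L) =
          (S a * ((u ^ m : Lˣ) : L)) * (S c * ((u ^ (0 : ℤ) : Lˣ) : L)) := by
        simp [map_mul]
        ring
      rw [this]
      exact hmulT _ (h1 m) _ (h2 0)
  have hsupT : ∀ y : L, y ∈ (⨆ d, M d : Submodule k L) := by
    intro y
    obtain ⟨nn, a, hya⟩ := IsLocalization.Away.surj (S := L) s y
    have hpow : S s ^ nn = ((u ^ (nn : ℤ) : Lˣ) : L) := by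
      rw [zpow_natCast, Units.val_pow_eq_pow_val, hu]
    have : y = S a * ((u ^ (-(nn : ℤ)) : Lˣ) : L) := by
      have h2 : y * ((u ^ (nn : ℤ) : Lˣ) : L) = S a := by rw [← hpow]; exact hya
      calc y = y * (((u ^ (nn : ℤ) : Lˣ) : L) * ((u ^ (-(nn : ℤ)) : Lˣ) : L)) := by
              rw [← Units.val_mul, ← zpow_add, add_neg_cancel, zpow_zero, Units.val_one, mul_one]
        _ = S a * ((u ^ (-(nn : ℤ)) : Lˣ) : L) := by rw [← mul_assoc, h2]
    rw [this]
    exact hkey a _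
  -- eigenvectors for distinct integer eigenvalues summing to zero must vanish
  have indep : ∀ (F : Finset ℤ) (c : ℤ → L), (∀ d ∈ F, D' (c d) = (d : k) • c d) →
      (∑ d ∈ F, c d) = 0 → ∀ d ∈ F, c d = 0 := by
    intro F
    induction F using Finset.induction_on with
    | empty => intro c _ _ d hd; exact absurd hd (Finset.notMem_empty d)
    | @insert a F haF ih =>
      intro c hc hsum
      have hsum' : ∑ d ∈ insert a F, (d : k) • c d = 0 := by
        have hD : D' (∑ d ∈ insert a F, c d) = 0 := by rw [hsum, map_zero]
        rw [map_sum] at hD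
        rw [← hD]
        exact Finset.sum_congr rfl fun d hd => (hc d hd).symm
      have h3 : ∑ d ∈ insert a F, ((d : k) - (a : k)) • c d = 0 := by
        simp only [sub_smul]
        rw [Finset.sum_sub_distrib, hsum', ← Finset.smul_sum, hsum, smul_zero, sub_zero]
      rw [Finset.sum_insert haF, sub_self, zero_smul, zero_add] at h3
      have hzero : ∀ d ∈ F, ((d : k) - (a : k)) • c d = 0 := by
        refine ih (fun d => ((d : k) - (a : k)) • c d) (fun d hd => ?_) h3
        rw [D'.map_smul, hc d (Finset.mem_insert_of_mem hd), smul_comm]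
      have hF : ∀ d ∈ F, c d = 0 := by
        intro d hd
        have hne : ((d : k) - (a : k)) ≠ 0 := by
          rw [sub_ne_zero]
          intro h
          exact haF ((by exact_mod_cast h : d = a) ▸ hd)
        rcases smul_eq_zero.mp (hzero d hd) with h | h
        · exact absurd h hne
        · exact h
      intro d hd
      rcases Finset.mem_insert.mp hd with rfl | hd'
      · have hzsum : ∑ e ∈ F, c e = 0 := Finset.sum_eq_zero hF
        rw [Finset.sum_insert haF, hzsum, add_zero] at hsum
        exact hsum
      · exact hF d hd'
  constructor
  · intro hx0
    obtain ⟨c, hc, hcx⟩ := (Submodule.mem_iSup_iff_exists_finsupp M x).mp (hsupT x)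
    have heig : ∀ d ∈ c.support, D' ((d : k) • c d) = (d : k) • ((d : k) • c d) := by
      intro d _
      rw [D'.map_smul, hMeig d (c d) (hc d)]
    have hsum0 : ∑ d ∈ c.support, (d : k) • c d = 0 := by
      have hxsum : x = ∑ d ∈ c.support, c d := hcx.symm
      have : D' x = ∑ d ∈ c.support, (d : k) • c d := by
        rw [hxsum, map_sum]
        exact Finset.sum_congr rfl fun d hd => hMeig d (c d) (hc d)
      rw [← this, hx0]
    have hall := indep c.support (fun d => (d : k) • c d) heig hsum0
    have hnz : ∀ d ∈ c.support, d ≠ 0 → c d = 0 := by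
      intro d hd hd0
      rcases smul_eq_zero.mp (hall d hd) with h | h
      · exact absurd (by exact_mod_cast h) hd0
      · exact h
    have hx : x = c 0 := by
      rw [← hcx]
      show ∑ d ∈ c.support, c d = c 0
      refine Finset.sum_eq_single 0 (fun d hd hd0 => hnz d hd hd0) (fun h0 => ?_)
      exact Finsupp.notMem_support_iff.mp h0
    obtain ⟨a, haA, hac⟩ := (hMmem 0 (c 0)).mp (hc 0)
    have hca : c 0 = a := by rw [← hac, zpow_zero, Units.val_one, mul_one]
    rw [hx, hca]
    exact haA
  · intro hxA
    exact hAker x hxA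
end

section
/- With B, D, s as above (D(bᵢ)=λᵢbᵢ, D(s)=s, s ∈ B nonzero), the kernel of D on B is the intersection ker(D) = k[b₁s^{-λ₁},…,bₙs^{-λₙ}] ∩ B, computed inside the localization B_s. -/
open Module

/-- If a family of submodules is independent, any finitely-supported family of elements,
one from each submodule, summing to zero must be identically zero. -/
lemma stmt15_aux_indep {R N ι : Type*} [Ring R] [AddCommGroup N] [Module R N] [DecidableEq ι]
    {p : ι → Submodule R N} (h : iSupIndep p) (f : ι →₀ N) (hf : ∀ i, f i ∈ p i)
    (hsum : (f.sum fun _ y => y) = 0) : ∀ i, f i = 0 := by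
  classical
  have hinj := h.dfinsupp_lsum_injective
  set g : Π₀ i, p i := DFinsupp.mk f.support (fun i => ⟨f i, hf i⟩) with hgdef
  have hg : DFinsupp.lsum ℕ (M := fun i => ↥(p i)) (fun i => (p i).subtype) g = 0 := by
    rw [DFinsupp.lsum_apply_apply, DFinsupp.sumAddHom_apply]
    have h1 : ∑ i ∈ f.support, ((g i : N)) = 0 := by
      rw [← hsum, Finsupp.sum]
      refine Finset.sum_congr rfl fun i hi => ?_
      simp [hgdef, DFinsupp.mk_apply, hi]
    rw [← h1]
    refine Finset.sum_subset (DFinsupp.support_mk_subset) fun i _ hi => ?_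
    rw [DFinsupp.notMem_support_iff.mp hi]; rfl
  have hg0 : g = 0 := hinj (by rw [hg, map_zero])
  intro i
  by_cases hi : i ∈ f.support
  · have := congrArg (fun v => ((v i : ↥(p i)) : N)) hg0
    simpa [hgdef, DFinsupp.mk_apply, hi] using this
  · simpa using Finsupp.notMem_support_iff.mp hi

/-- A derivation applied to integer powers of a unit `u` with `D u = u`. -/
lemma stmt15_aux_zpow {k L : Type*} [Field k] [CommRing L] [Algebra k L]
    (D' : Derivation k L L) (u : Lˣ) (hu : D' (u : L) = (u : L)) :
    ∀ z : ℤ, D' ((u ^ z : Lˣ) : L) = (z : L) * ((u ^ z : Lˣ) : L) := by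
  have hnat : ∀ m : ℕ, D' ((u : L) ^ m) = (m : L) * (u : L) ^ m := by
    intro m
    induction m with
    | zero => simp
    | succ m ih =>
      rw [pow_succ, Derivation.leibniz, ih, hu, smul_eq_mul, smul_eq_mul]
      push_cast
      ring
  intro z
  rcases z with n | n
  · simpa [zpow_natCast, Units.val_pow_eq_pow_val] using hnat n
  · set v : L := ((u ^ (Int.negSucc n) : Lˣ) : L) with hvdef
    set w : L := (u : L) ^ (n + 1) with hwdef
    have hvw : v * w = 1 := by
      rw [hvdef, hwdef, ← Units.val_pow_eq_pow_val, ← Units.val_mul, ← zpow_natCast,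
        ← zpow_add, Int.negSucc_eq]
      rw [show (-((n:ℤ) + 1) + ((n:ℕ) + 1 : ℕ)) = 0 by push_cast; ring]
      simp
    have hDw : D' w = ((n : L) + 1) * w := by
      rw [hwdef]
      have := hnat (n + 1)
      push_cast at this
      exact this
    have h0 : v * D' w + w * D' v = (0 : L) := by
      have h1 : D' (v * w) = v • D' w + w • D' v := Derivation.leibniz D' v w
      rw [hvw, Derivation.map_one_eq_zero] at h1
      simp only [smul_eq_mul] at h1
      exact h1.symm
    rw [hDw] at h0
    have hcast : (Int.negSucc n : L) = -((n : L) + 1) := by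
      rw [Int.negSucc_eq]; push_cast; ring
    rw [hcast]
    linear_combination v * h0 + (-(((n : L) + 1) * v + D' v)) * hvw

/-- with `B = k[b₁,…,bₙ]`, `D bᵢ = λᵢ bᵢ`, `D s = s`, `s ≠ 0`, the
kernel of `D` on `B` is `k[b₁ s^{-λ₁},…,bₙ s^{-λₙ}] ∩ B`, computed inside `B_s`. -/
theorem stmt15 {k B : Type*} [Field k] [CharZero k] [CommRing B] [IsDomain B]
    [Algebra k B]
    (n : ℕ) (b : Fin n → B) (hgen : Algebra.adjoin k (Set.range b) = ⊤)
    (D : Derivation k B B) (lam : Fin n → ℤ)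
    (hDb : ∀ i, D (b i) = lam i • b i)
    (s : B) (hs : s ≠ 0) (hDs : D s = s)
    (D' : Derivation k (Localization.Away s) (Localization.Away s))
    (hext : ∀ x : B, D' (algebraMap B (Localization.Away s) x) =
      algebraMap B (Localization.Away s) (D x)) :
    ∀ x : B, D x = 0 ↔
      algebraMap B (Localization.Away s) x ∈
        Algebra.adjoin k (Set.range fun i =>
          algebraMap B (Localization.Away s) (b i) *
            ((((IsLocalization.Away.algebraMap_isUnit (S := Localization.Away s) s).unit :
                (Localization.Away s)ˣ) ^ (-(lam i)) : (Localization.Away s)ˣ) :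
              Localization.Away s)) := by
  classical
  set L := Localization.Away s with hLdef
  set φ : B →+* L := algebraMap B L with hφdef
  set u : Lˣ := (IsLocalization.Away.algebraMap_isUnit (S := L) s).unit with hudef
  have hu : (u : L) = φ s := (IsLocalization.Away.algebraMap_isUnit (S := L) s).unit_spec
  set c : Fin n → L := fun i => φ (b i) * ((u ^ (-(lam i)) : Lˣ) : L) with hcdef
  have hinj : Function.Injective φ :=
    IsLocalization.injective L (Submonoid.powers_le.mpr (mem_nonZeroDivisors_of_ne_zero hs))
  have hDu : ∀ z : ℤ, D' ((u ^ z : Lˣ) : L) = (z : L) * ((u ^ z : Lˣ) : L) := by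
    refine stmt15_aux_zpow D' u ?_
    rw [hu, hext s, hDs]
  have hDc : ∀ i, D' (c i) = 0 := by
    intro i
    have h1 : D' (φ (b i)) = ((lam i : ℤ) : L) * φ (b i) := by
      rw [hext (b i), hDb i, map_zsmul, zsmul_eq_mul]
    rw [hcdef]
    simp only
    rw [Derivation.leibniz, h1, hDu (-(lam i)), smul_eq_mul, smul_eq_mul]
    push_cast
    ring
  intro x
  constructor
  · -- hard direction
    intro hDx
    set A : Subalgebra k L := Algebra.adjoin k (Set.range c) with hAdef
    set N : ℤ → Submodule k B := fun d =>
      { carrier := {y | D y = d • y ∧ ∃ a ∈ A, φ y = a * ((u ^ d : Lˣ) : L)}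
        add_mem' := by
          rintro y z ⟨hy1, a, ha, hy2⟩ ⟨hz1, a', ha', hz2⟩
          refine ⟨by rw [map_add, hy1, hz1, smul_add], a + a', add_mem ha ha', ?_⟩
          rw [map_add, hy2, hz2, add_mul]
        zero_mem' := ⟨by simp, 0, zero_mem _, by simp⟩
        smul_mem' := by
          rintro r y ⟨hy1, a, ha, hy2⟩
          refine ⟨by rw [Derivation.map_smul, hy1, smul_comm], algebraMap k L r * a,
            mul_mem (Subalgebra.algebraMap_mem A r) ha, ?_⟩
          rw [Algebra.smul_def, map_mul, hy2, ← IsScalarTower.algebraMap_apply, mul_assoc] }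
      with hNdef
    have hNsup : ∀ y ∈ Submonoid.closure (Set.range b), ∃ d : ℤ, y ∈ N d := by
      intro y hy
      induction hy using Submonoid.closure_induction with
      | mem z hz =>
        obtain ⟨i, rfl⟩ := hz
        refine ⟨lam i, hDb i, c i, Algebra.subset_adjoin ⟨i, rfl⟩, ?_⟩
        rw [hcdef]
        simp only
        rw [mul_assoc, ← Units.val_mul, ← zpow_add, neg_add_cancel, zpow_zero,
          Units.val_one, mul_one]
      | one => exact ⟨0, by simp, 1, one_mem _, by simp⟩
      | mul z w hz hw ihz ihw =>
        obtain ⟨d, hz1, a, ha, hz2⟩ := ihz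
        obtain ⟨e, hw1, a', ha', hw2⟩ := ihw
        refine ⟨d + e, ?_, a * a', mul_mem ha ha', ?_⟩
        · rw [Derivation.leibniz, hz1, hw1, smul_eq_mul, smul_eq_mul,
            zsmul_eq_mul, zsmul_eq_mul, zsmul_eq_mul]
          push_cast
          ring
        · rw [map_mul, hz2, hw2, zpow_add, Units.val_mul]
          ring
    have hTop : (⊤ : Submodule k B) ≤ ⨆ d, N d := by
      have h1 : (⊤ : Submodule k B) = Submodule.span k (Submonoid.closure (Set.range b)) := by
        rw [← Algebra.adjoin_eq_span, hgen, Algebra.top_toSubmodule]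
      rw [h1, Submodule.span_le]
      intro y hy
      obtain ⟨d, hd⟩ := hNsup y hy
      exact Submodule.mem_iSup_of_mem d hd
    have hxsup : x ∈ ⨆ d, N d := hTop Submodule.mem_top
    rw [Submodule.mem_iSup_iff_exists_finsupp] at hxsup
    obtain ⟨f, hf, hsum⟩ := hxsup
    haveI : NoZeroSMulDivisors k B :=
      ⟨fun {c y} h => by rw [Algebra.smul_def, mul_eq_zero, map_eq_zero] at h; exact h⟩
    set T : Module.End k B := D.toLinearMap with hTdef
    have hindep : iSupIndep (fun d : ℤ => T.eigenspace ((d : ℤ) : k)) :=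
      (Module.End.eigenspaces_iSupIndep T).comp Int.cast_injective
    set g : ℤ →₀ B := f - Finsupp.single 0 x with hgdef
    have hxe : x ∈ T.eigenspace (((0 : ℤ) : ℤ) : k) := by
      rw [Module.End.mem_eigenspace_iff]
      show D x = _
      rw [hDx]
      simp
    have hg : ∀ d, g d ∈ T.eigenspace ((d : ℤ) : k) := by
      intro d
      have h1 : f d ∈ T.eigenspace ((d : ℤ) : k) := by
        rw [Module.End.mem_eigenspace_iff, Int.cast_smul_eq_zsmul]
        exact (hf d).1
      have h2 : (Finsupp.single (0 : ℤ) x) d ∈ T.eigenspace ((d : ℤ) : k) := by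
        rcases eq_or_ne d 0 with rfl | hd
        · simpa [Finsupp.single_apply] using hxe
        · rw [Finsupp.single_apply, if_neg (Ne.symm hd)]
          exact zero_mem _
      have := sub_mem h1 h2
      simpa [hgdef, Finsupp.sub_apply] using this
    have hgsum : (g.sum fun _ y => y) = 0 := by
      rw [hgdef, Finsupp.sum_sub_index (fun a b₁ b₂ => rfl), hsum,
        Finsupp.sum_single_index rfl, sub_self]
    have hall := stmt15_aux_indep hindep g hg hgsum
    have hf0 : f 0 = x := by
      have := hall 0
      rw [hgdef] at this
      simp only [Finsupp.sub_apply, Finsupp.single_eq_same] at this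
      exact sub_eq_zero.mp this
    have hx0 : x ∈ N 0 := hf0 ▸ hf 0
    obtain ⟨-, a, ha, hxa⟩ := hx0
    rw [zpow_zero, Units.val_one, mul_one] at hxa
    show φ x ∈ A
    rw [hxa]
    exact ha
  · intro hx
    have hker : ∀ y ∈ Algebra.adjoin k (Set.range c), D' y = 0 := by
      intro y hy
      let K : Subalgebra k L :=
        { carrier := {y | D' y = 0}
          mul_mem' := fun {a b} ha hb => by
            simp only [Set.mem_setOf_eq] at ha hb ⊢
            rw [Derivation.leibniz, ha, hb, smul_zero, smul_zero, add_zero]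
          add_mem' := fun {a b} ha hb => by
            simp only [Set.mem_setOf_eq] at ha hb ⊢
            rw [map_add, ha, hb, add_zero]
          algebraMap_mem' := fun r => Derivation.map_algebraMap D' r }
      have : Algebra.adjoin k (Set.range c) ≤ K :=
        Algebra.adjoin_le (fun z hz => by
          obtain ⟨i, rfl⟩ := hz
          exact hDc i)
      exact this hy
    have h1 : D' (φ x) = 0 := hker _ hx
    rw [hext x] at h1
    exact hinj (by rw [h1, map_zero])
end
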